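/- Let R be a TRS and A a strongly linear interpretation (f_A(x₁,…,xₙ) = x₁+⋯+xₙ+c_f over ℕ), and suppose every rule l → r of R is non-duplicating (no variable occurs more often in r than in l). Set Δ := max over rules l → r of ([r]₁ ∸ [l]₁) evaluated under the zero assignment, where ∸ is truncated subtraction. Then for all terms s, t with s →_R t (at any position, under any substitution), [t] ≤ [s] + Δ, where [u] denotes the evaluation of u under the zero assignment. -/

import Mathlib

/-- First-order terms over a signature `F` with ℕ-indexed variables. -/
inductive Term (F : Type) : Type
  | var : ℕ → Term F
  | fn : F → List (Term F) → Term F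

/-- Evaluation under the strongly linear interpretation
`f_A(x₁,…,xₙ) = x₁ + ⋯ + xₙ + c_f` over ℕ, with assignment `α`. -/
def evalSL {F : Type} (c : F → ℕ) (α : ℕ → ℕ) : Term F → ℕ
  | .var v => α v
  | .fn f ts => (ts.attach.map fun u => evalSL c α u.1).sum + c f
  decreasing_by
    have := List.sizeOf_lt_of_mem u.2
    simp only [Term.fn.sizeOf_spec] at *
    omega

/-- The list of variable occurrences of a term (with multiplicity). -/
def varList {F : Type} : Term F → List ℕ
  | .var v => [v]
  | .fn _ ts => (ts.attach.map fun u => varList u.1).flatten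
  decreasing_by
    have := List.sizeOf_lt_of_mem u.2
    simp only [Term.fn.sizeOf_spec] at *
    omega

/-- The list of function symbol occurrences of a term (with multiplicity). -/
def fnList {F : Type} : Term F → List F
  | .var _ => []
  | .fn f ts => f :: (ts.attach.map fun u => fnList u.1).flatten
  decreasing_by
    have := List.sizeOf_lt_of_mem u.2
    simp only [Term.fn.sizeOf_spec] at *
    omega

/-- The size of a term: the number of symbols in it. -/
def tsize {F : Type} : Term F → ℕ
  | .var _ => 1
  | .fn _ ts => 1 + (ts.attach.map fun u => tsize u.1).sum
  decreasing_by
    have := List.sizeOf_lt_of_mem u.2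
    simp only [Term.fn.sizeOf_spec] at *
    omega

/-- Application of a substitution to a term. -/
def subst {F : Type} (σ : ℕ → Term F) : Term F → Term F
  | .var v => σ v
  | .fn f ts => .fn f (ts.attach.map fun u => subst σ u.1)
  decreasing_by
    have := List.sizeOf_lt_of_mem u.2
    simp only [Term.fn.sizeOf_spec] at *
    omega

/-- A rewrite step (at some position, under some substitution). -/
inductive RewriteAt {F : Type} (R : Term F → Term F → Prop) :
    Term F → List ℕ → Term F → Prop
  | root (l r : Term F) (σ : ℕ → Term F) :
      R l r → RewriteAt R (subst σ l) [] (subst σ r)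
  | congr (f : F) (ts : List (Term F)) (i : ℕ) (u v : Term F) (p : List ℕ) :
      ts[i]? = some u → RewriteAt R u p v →
      RewriteAt R (Term.fn f ts) (i :: p) (Term.fn f (ts.set i v))

/-- Number of occurrences of the variable `x` in `t`. -/
def countVar {F : Type} (x : ℕ) (t : Term F) : ℕ := (varList t).count x

/-!
Evaluating `t` under an assignment `α` gives the zero-assignment value of `t` plus `α` summed
over the variable occurrences of `t`, and a substitution `σ` only changes the assignment, to
`v ↦ [σ v]`. For a non-duplicating rule the variable part of `rσ` is therefore at most that of
`lσ`, so a root step raises the value by at most `[r] ∸ [l] ≤ Δ`. Since the interpretation is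
additive in the arguments, a step below the root changes the value by exactly what it changes
the rewritten argument by.
-/

theorem List.Subperm.sum_map_le_sum_map {ι M : Type*} [AddCommMonoid M] [Preorder M]
    [AddLeftMono M] {l₁ l₂ : List ι} (h : l₁.Subperm l₂) (f : ι → M) (h₀ : ∀ a ∈ l₂, 0 ≤ f a) :
    (l₁.map f).sum ≤ (l₂.map f).sum := by
  obtain ⟨l, hperm, hsub⟩ := h
  exact (hperm.map f).sum_eq ▸ (hsub.map f).sum_le_sum (by simpa using h₀)

theorem List.sum_set_add {M : Type*} [AddCommMonoid M] {L : List M} {i : ℕ} {a : M}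
    (h : L[i]? = some a) (b : M) : (L.set i b).sum + a = L.sum + b := by
  obtain ⟨hi, rfl⟩ := List.getElem?_eq_some_iff.mp h
  conv_rhs => rw [← List.set_getElem_self hi]
  simp only [List.sum_set, hi, if_true]
  abel

theorem List.le_foldr_max_of_mem {α : Type*} [LinearOrder α] {a : α} {L : List α} (b : α)
    (h : a ∈ L) : a ≤ L.foldr max b := by
  induction L with
  | nil => simp at h
  | cons _ _ _ => grind

section StronglyLinear

variable {F : Type} (c : F → ℕ)

theorem evalSL_fn (α : ℕ → ℕ) (f : F) (ts : List (Term F)) :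
    evalSL c α (.fn f ts) = (ts.map (evalSL c α)).sum + c f := by
  rw [evalSL]; simp

theorem varList_fn (f : F) (ts : List (Term F)) :
    varList (Term.fn f ts) = (ts.map varList).flatten := by
  rw [varList]; simp

theorem evalSL_subst (α : ℕ → ℕ) (σ : ℕ → Term F) :
    ∀ t, evalSL c α (subst σ t) = evalSL c (fun v => evalSL c α (σ v)) t
  | .var v => by simp [subst, evalSL]
  | .fn f ts => by
    rw [subst, evalSL_fn, evalSL_fn, List.map_map]
    congr 1
    conv_rhs => rw [← List.attach_map_subtype_val ts, List.map_map]
    exact congrArg List.sum <| List.map_congr_left fun u _ => evalSL_subst α σ u.1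
  decreasing_by
    have := List.sizeOf_lt_of_mem u.2
    simp only [Term.fn.sizeOf_spec] at *
    omega

theorem evalSL_eq_sum_varList_add (α : ℕ → ℕ) :
    ∀ t : Term F, evalSL c α t = ((varList t).map α).sum + evalSL c (fun _ => 0) t
  | .var v => by simp [varList, evalSL]
  | .fn f ts => by
    have ih : ts.map (evalSL c α)
        = ts.map fun u => ((varList u).map α).sum + evalSL c (fun _ => 0) u :=
      List.map_congr_left fun u _ => evalSL_eq_sum_varList_add α u
    rw [evalSL_fn, evalSL_fn, varList_fn, ih, List.sum_map_add, List.map_flatten,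
      List.sum_flatten, List.map_map, List.map_map, add_assoc]
    rfl
  decreasing_by
    have := List.sizeOf_lt_of_mem ‹u ∈ ts›
    simp only [Term.fn.sizeOf_spec] at *
    omega

theorem evalSL_le_add_tsub_of_countVar_le {l r : Term F} (h : ∀ x, countVar x r ≤ countVar x l)
    (α : ℕ → ℕ) :
    evalSL c α r ≤ evalSL c α l + (evalSL c (fun _ => 0) r - evalSL c (fun _ => 0) l) := by
  have hvars : ((varList r).map α).sum ≤ ((varList l).map α).sum :=
    (List.subperm_iff_count.mpr h).sum_map_le_sum_map α fun _ _ => Nat.zero_le _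
  rw [evalSL_eq_sum_varList_add c α r, evalSL_eq_sum_varList_add c α l]
  omega

theorem evalSL_fn_set_add (α : ℕ → ℕ) (f : F) {ts : List (Term F)} {i : ℕ} {u : Term F}
    (h : ts[i]? = some u) (v : Term F) :
    evalSL c α (.fn f (ts.set i v)) + evalSL c α u = evalSL c α (.fn f ts) + evalSL c α v := by
  have := List.sum_set_add (L := ts.map (evalSL c α)) (i := i) (a := evalSL c α u) (by simp [h])
    (evalSL c α v)
  rw [evalSL_fn, evalSL_fn, List.map_set]
  omega

theorem RewriteAt.evalSL_le_add {R : Term F → Term F → Prop} {α : ℕ → ℕ} {Δ : ℕ}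
    (hroot : ∀ l r σ, R l r → evalSL c α (subst σ r) ≤ evalSL c α (subst σ l) + Δ)
    {s t : Term F} {q : List ℕ} (hstep : RewriteAt R s q t) :
    evalSL c α t ≤ evalSL c α s + Δ := by
  induction hstep with
  | root l r σ hR => exact hroot l r σ hR
  | congr f ts i u v p hu _ ih =>
    have := evalSL_fn_set_add c α f hu v
    omega

end StronglyLinear

/-- for a non-duplicating TRS `R` compatible with a strongly linear
interpretation, with `Δ = max_{l → r ∈ R} ([r] ∸ [l])` (zero assignment,
truncated subtraction), every rewrite step `s →_R t` satisfies `[t] ≤ [s] + Δ`. -/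
theorem stmt15 {F : Type} (c : F → ℕ) (R : List (Term F × Term F))
    (hnd : ∀ p ∈ R, ∀ x : ℕ, countVar x p.2 ≤ countVar x p.1)
    (Δ : ℕ)
    (hΔ : Δ = (R.map fun p =>
      evalSL c (fun _ => 0) p.2 - evalSL c (fun _ => 0) p.1).foldr max 0) :
    ∀ s t : Term F, (∃ q, RewriteAt (fun l r => (l, r) ∈ R) s q t) →
      evalSL c (fun _ => 0) t ≤ evalSL c (fun _ => 0) s + Δ := by
  rintro s t ⟨q, hstep⟩
  refine hstep.evalSL_le_add c fun l r σ hR => ?_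
  have hrule : evalSL c (fun _ => 0) r - evalSL c (fun _ => 0) l ≤ Δ :=
    hΔ ▸ List.le_foldr_max_of_mem 0 (List.mem_map.mpr ⟨(l, r), hR, rfl⟩)
  have hsubst := evalSL_le_add_tsub_of_countVar_le c (l := l) (r := r) (hnd _ hR)
    fun v => evalSL c (fun _ => 0) (σ v)
  rw [evalSL_subst, evalSL_subst]
  omega
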